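/- Let θ, θ* be probability distributions on a finite set S⁺ with |S⁺| ≤ 2S (S ≥ 1), V : S⁺ → [0, B_⋆] with B_⋆ > 0, c_min > 0, and suppose for every s' ∈ S⁺: |θ(s') − θ*(s')| ≤ (1/8)·√(c_min·θ*(s')/(S·B_⋆)) + c_min/(4·S·B_⋆). Let μ = ∑_{s''} θ*(s'')·V(s'') and 𝕍 = ∑_{s'} θ*(s')·(V(s') − μ)^2. Then ∑_{s'} (θ(s') − θ*(s'))·(V(s') − μ) ≤ (1/4)·√(c_min·𝕍/B_⋆) + c_min/2. -/

import Mathlib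

/-!
Bound each summand by `|θ s - θ* s| * |V s - μ|` and split the closeness radius into its two
parts. The `√θ*` part contributes `∑ √θ*(s) |V s - μ|`, which Cauchy–Schwarz against the
constant vector bounds by `√(|S⁺| · 𝕍) ≤ √(2S𝕍)`; the constant part is paid for by
`|V s - μ| ≤ B⋆`, since the mean `μ` also lies in `[0, B⋆]`.
-/

open Finset

section

variable {ι : Type*} [Fintype ι]

theorem sum_sqrt_mul_abs_le_sqrt_card_mul (w f : ι → ℝ) (hw : ∀ s, 0 ≤ w s) :
    ∑ s, √(w s) * |f s| ≤ √(Fintype.card ι * ∑ s, w s * f s ^ 2) := by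
  have hwf : ∀ s, 0 ≤ w s * f s ^ 2 := fun s => mul_nonneg (hw s) (sq_nonneg _)
  calc ∑ s, √(w s) * |f s| = ∑ s, √1 * √(w s * f s ^ 2) := by
        refine sum_congr rfl fun s _ => ?_
        rw [Real.sqrt_one, one_mul, Real.sqrt_mul (hw s), Real.sqrt_sq_eq_abs]
    _ ≤ √(∑ _s : ι, (1 : ℝ)) * √(∑ s, w s * f s ^ 2) :=
        Real.sum_sqrt_mul_sqrt_le _ (fun _ => zero_le_one) hwf
    _ = √(Fintype.card ι * ∑ s, w s * f s ^ 2) := by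
        rw [← Real.sqrt_mul (by positivity)]
        simp

theorem abs_sub_weighted_mean_le (w V : ι → ℝ) (B : ℝ) (hw : ∀ s, 0 ≤ w s)
    (hwsum : ∑ s, w s = 1) (hV : ∀ s, 0 ≤ V s ∧ V s ≤ B) (s : ι) :
    |V s - ∑ t, w t * V t| ≤ B := by
  have hmean_nonneg : 0 ≤ ∑ t, w t * V t :=
    sum_nonneg fun t _ => mul_nonneg (hw t) (hV t).1
  have hmean_le : ∑ t, w t * V t ≤ B :=
    calc ∑ t, w t * V t ≤ ∑ t, w t * B :=
          sum_le_sum fun t _ => mul_le_mul_of_nonneg_left (hV t).2 (hw t)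
      _ = B := by rw [← sum_mul, hwsum, one_mul]
  exact abs_le.mpr ⟨by linarith [(hV s).1], by linarith [(hV s).2]⟩

theorem sum_mul_le_of_abs_le_mul_sqrt_add (d w f : ι → ℝ) (a b : ℝ) (hw : ∀ s, 0 ≤ w s)
    (ha : 0 ≤ a) (hd : ∀ s, |d s| ≤ a * √(w s) + b) :
    ∑ s, d s * f s ≤ a * √(Fintype.card ι * ∑ s, w s * f s ^ 2) + b * ∑ s, |f s| :=
  calc ∑ s, d s * f s ≤ ∑ s, (a * √(w s) + b) * |f s| := by
        refine sum_le_sum fun s _ => ?_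
        calc d s * f s ≤ |d s| * |f s| := by rw [← abs_mul]; exact le_abs_self _
          _ ≤ (a * √(w s) + b) * |f s| := mul_le_mul_of_nonneg_right (hd s) (abs_nonneg _)
    _ = a * ∑ s, √(w s) * |f s| + b * ∑ s, |f s| := by
        simp only [add_mul, sum_add_distrib, mul_sum, mul_assoc]
    _ ≤ a * √(Fintype.card ι * ∑ s, w s * f s ^ 2) + b * ∑ s, |f s| := by
        gcongr
        exact sum_sqrt_mul_abs_le_sqrt_card_mul w f hw

end

theorem sqrt_div_mul_sqrt_mul_le {c v B S n : ℝ} (hc : 0 ≤ c) (hv : 0 ≤ v) (hB : 0 < B)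
    (hS : 0 < S) (hn : n ≤ 2 * S) :
    √(c / (S * B)) * √(n * v) ≤ 2 * √(c * v / B) := by
  have hcvB : 0 ≤ c * v / B := by positivity
  have hradicand : c / (S * B) * (n * v) ≤ 2 ^ 2 * (c * v / B) :=
    calc c / (S * B) * (n * v) = n / S * (c * v / B) := by field_simp
      _ ≤ 2 * (c * v / B) := by
          gcongr
          rwa [div_le_iff₀ hS]
      _ ≤ 2 ^ 2 * (c * v / B) := by linarith
  calc √(c / (S * B)) * √(n * v) = √(c / (S * B) * (n * v)) :=
        (Real.sqrt_mul (by positivity) _).symm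
    _ ≤ √(2 ^ 2 * (c * v / B)) := Real.sqrt_le_sqrt hradicand
    _ = 2 * √(c * v / B) := by rw [Real.sqrt_mul (by norm_num), Real.sqrt_sq (by norm_num)]

theorem known_pair_expectation_diff_bound_general {Splus : Type*} [Fintype Splus] (S : ℕ) (hS : 1 ≤ S)
    (hcard : Fintype.card Splus ≤ 2 * S)
    (θ θstar : Splus → ℝ)
    (hθstar : ∀ s, 0 ≤ θstar s) (hθstarsum : ∑ s, θstar s = 1)
    (Bstar cmin : ℝ) (hB : 0 < Bstar) (hc : 0 < cmin)
    (V : Splus → ℝ) (hV : ∀ s, 0 ≤ V s ∧ V s ≤ Bstar)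
    (hclose : ∀ s, |θ s - θstar s| ≤
      (1 / 8) * Real.sqrt (cmin * θstar s / (S * Bstar)) + cmin / (4 * S * Bstar))
    (mu Var : ℝ) (hmu : mu = ∑ s, θstar s * V s)
    (hVar : Var = ∑ s, θstar s * (V s - mu) ^ 2) :
    ∑ s, (θ s - θstar s) * (V s - mu) ≤
      (1 / 4) * Real.sqrt (cmin * Var / Bstar) + cmin / 2 := by
  have hS0 : (0 : ℝ) < S := by exact_mod_cast hS
  have hcard' : (Fintype.card Splus : ℝ) ≤ 2 * S := by exact_mod_cast hcard
  have hVar0 : 0 ≤ Var := hVar ▸ sum_nonneg fun s _ => mul_nonneg (hθstar s) (sq_nonneg _)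
  have hclose' : ∀ s, |θ s - θstar s| ≤
      (1 / 8) * √(cmin / (S * Bstar)) * √(θstar s) + cmin / (4 * S * Bstar) := fun s => by
    rw [mul_assoc, ← Real.sqrt_mul' _ (hθstar s), div_mul_eq_mul_div cmin]
    exact hclose s
  have hsplit := sum_mul_le_of_abs_le_mul_sqrt_add (fun s => θ s - θstar s) θstar
    (fun s => V s - mu) _ _ hθstar (by positivity) hclose'
  rw [← hVar] at hsplit
  have hsqrt_part := sqrt_div_mul_sqrt_mul_le hc.le hVar0 hB hS0 hcard'
  have hdeviation : ∑ s, |V s - mu| ≤ 2 * S * Bstar :=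
    calc ∑ s, |V s - mu| ≤ ∑ _s : Splus, Bstar := sum_le_sum fun s _ =>
          hmu ▸ abs_sub_weighted_mean_le θstar V Bstar hθstar hθstarsum hV s
      _ = Fintype.card Splus * Bstar := by simp
      _ ≤ 2 * S * Bstar := by gcongr
  have hconst_part : cmin / (4 * S * Bstar) * ∑ s, |V s - mu| ≤ cmin / 2 :=
    calc cmin / (4 * S * Bstar) * ∑ s, |V s - mu| ≤ cmin / (4 * S * Bstar) * (2 * S * Bstar) := by
          gcongr
      _ = cmin / 2 := by field_simp; ring
  linarith

theorem known_pair_expectation_diff_bound {Splus : Type*} [Fintype Splus] (S : ℕ) (hS : 1 ≤ S)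
    (hcard : Fintype.card Splus ≤ 2 * S)
    (θ θstar : Splus → ℝ)
    (hθ : ∀ s, 0 ≤ θ s) (hθsum : ∑ s, θ s = 1)
    (hθstar : ∀ s, 0 ≤ θstar s) (hθstarsum : ∑ s, θstar s = 1)
    (Bstar cmin : ℝ) (hB : 0 < Bstar) (hc : 0 < cmin)
    (V : Splus → ℝ) (hV : ∀ s, 0 ≤ V s ∧ V s ≤ Bstar)
    (hclose : ∀ s, |θ s - θstar s| ≤
      (1 / 8) * Real.sqrt (cmin * θstar s / (S * Bstar)) + cmin / (4 * S * Bstar))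
    (mu Var : ℝ) (hmu : mu = ∑ s, θstar s * V s)
    (hVar : Var = ∑ s, θstar s * (V s - mu) ^ 2) :
    ∑ s, (θ s - θstar s) * (V s - mu) ≤
      (1 / 4) * Real.sqrt (cmin * Var / Bstar) + cmin / 2 :=
  known_pair_expectation_diff_bound_general S hS hcard θ θstar hθstar hθstarsum Bstar cmin hB hc V
    hV hclose mu Var hmu hVar
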